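/- arXiv:1611.08923 — 2 statements merged into one kernel-verified Lean document; each statement's English description precedes it below -/
import Mathlib

section
/- If f : ℤ × ℤ → K satisfies the dpKdV equation (f(n,m+1) − f(n+1,m))·(f(n,m) − f(n+1,m+1)) = a − b for all n, m, then the Lax representation L_a(f(n,m+1), f(n+1,m+1)) · L_b(f(n,m), f(n,m+1)) = L_b(f(n+1,m), f(n+1,m+1)) · L_a(f(n,m), f(n+1,m)) holds for all n, m and all λ, where L_a(p,q) = [[p, a + p·q − λ], [−1, −q]]. -/
/-- The 2×2 Lax matrix `L_a(p,q)` of dpKdV. -/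
def LaxKdV {K : Type*} [Field K] (a lam p q : K) : Matrix (Fin 2) (Fin 2) K :=
  !![p, a + p * q - lam; -1, -q]

/-- A solution of the dpKdV equation satisfies the Lax representation. -/
theorem dpKdV_implies_lax {K : Type*} [Field K] (a b : K) (f : ℤ × ℤ → K)
    (hf : ∀ n m : ℤ, (f (n, m + 1) - f (n + 1, m)) * (f (n, m) - f (n + 1, m + 1)) = a - b) :
    ∀ (n m : ℤ) (lam : K),
      LaxKdV a lam (f (n, m + 1)) (f (n + 1, m + 1)) *
        LaxKdV b lam (f (n, m)) (f (n, m + 1)) =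
      LaxKdV b lam (f (n + 1, m)) (f (n + 1, m + 1)) *
        LaxKdV a lam (f (n, m)) (f (n + 1, m)) := by
  intro n m lam
  have h := hf n m
  unfold LaxKdV
  ext i j
  fin_cases i <;> fin_cases j <;>
    simp [Matrix.mul_apply, Fin.sum_univ_two] <;> first
    | linear_combination h | linear_combination -h
    | linear_combination (f (n, m + 1) + f (n + 1, m)) * h
    | linear_combination -(f (n, m + 1) + f (n + 1, m)) * h
end

section
/- Conversely, if f : ℤ × ℤ → K is such that L_a(f(n,m+1), f(n+1,m+1)) · L_b(f(n,m), f(n,m+1)) = L_b(f(n+1,m), f(n+1,m+1)) · L_a(f(n,m), f(n+1,m)) holds for all λ ∈ K (with K infinite, or for at least two distinct values of λ), then f satisfies the dpKdV equation (f(n,m+1) − f(n+1,m))·(f(n,m) − f(n+1,m+1)) = a − b. -/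
/-- Conversely, the Lax representation (for all values of the spectral parameter,
over an infinite field) implies the dpKdV equation. -/
theorem lax_implies_dpKdV {K : Type*} [Field K] [Infinite K] (a b : K) (f : ℤ × ℤ → K)
    (hlax : ∀ (n m : ℤ) (lam : K),
      LaxKdV a lam (f (n, m + 1)) (f (n + 1, m + 1)) *
        LaxKdV b lam (f (n, m)) (f (n, m + 1)) =
      LaxKdV b lam (f (n + 1, m)) (f (n + 1, m + 1)) *
        LaxKdV a lam (f (n, m)) (f (n + 1, m))) :
    ∀ n m : ℤ, (f (n, m + 1) - f (n + 1, m)) * (f (n, m) - f (n + 1, m + 1)) = a - b := by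
  intro n m
  have h := congrArg (fun M => M 1 1) (hlax n m 0)
  simp only [LaxKdV, Matrix.mul_apply, Fin.sum_univ_two, Matrix.cons_val_zero,
    Matrix.cons_val_one, Matrix.head_cons, Matrix.cons_val', Matrix.head_fin_const,
    Matrix.of_apply, Matrix.cons_val_fin_one, Matrix.empty_val'] at h
  linear_combination -h
end
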